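/- Let S be a standard Borel space. Then the Jordan decomposition maps μ ↦ μ⁺ and μ ↦ μ⁻, from the space M±(S) of finite signed measures on S to the space M(S) of finite measures on S, are measurable, where both spaces carry the σ-algebra generated by the evaluation maps μ ↦ μ(B) over measurable sets B ⊆ S. -/

import Mathlib

open MeasureTheory

/-- The σ-algebra on the space `M±(S)` of finite signed measures on `S`,
generated by the evaluation maps `μ ↦ μ B` over measurable sets `B`. -/
instance signedMeasureMeasurableSpace (S : Type*) [MeasurableSpace S] :
    MeasurableSpace (SignedMeasure S) :=
  ⨆ (B : Set S) (_ : MeasurableSet B),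
    MeasurableSpace.comap (fun μ : SignedMeasure S => μ B) inferInstance

/-! If `P` is a Hahn positive set of `μ`, then `μ⁺ B = μ (P ∩ B)`. A countable algebra `𝒜`
generating the σ-algebra is dense for the total variation `|μ|`, and
`|μ (P ∩ B) - μ (A ∩ B)| ≤ |μ| (P ∆ A)`, so `μ⁺ B = ⨆ A ∈ 𝒜, (μ (A ∩ B))⁺`. As `𝒜` does not
depend on `μ`, this is a countable supremum of measurable functions of `μ`. The same holds for `μ⁻ = (-μ)⁺`. -/

open MeasurableSpace Set
open scoped symmDiff

theorem MeasurableSpace.exists_countable_isSetAlgebra_generateFrom (S : Type*)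
    [m : MeasurableSpace S] [CountablyGenerated S] :
    ∃ 𝒜 : Set (Set S), 𝒜.Countable ∧ IsSetAlgebra 𝒜 ∧ m = generateFrom 𝒜 :=
  ⟨generateSetAlgebra (countableGeneratingSet S),
    countable_generateSetAlgebra countable_countableGeneratingSet,
    isSetAlgebra_generateSetAlgebra,
    by rw [generateFrom_generateSetAlgebra_eq, generateFrom_countableGeneratingSet]⟩

namespace MeasureTheory.SignedMeasure

variable {S : Type*} [MeasurableSpace S]

theorem measurable_apply {B : Set S} (hB : MeasurableSet B) :
    Measurable fun μ : SignedMeasure S => μ B :=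
  Measurable.of_comap_le <| le_iSup₂_of_le B hB le_rfl

theorem abs_apply_sub_apply_le (μ : SignedMeasure S) {s t : Set S}
    (hs : MeasurableSet s) (ht : MeasurableSet t) :
    |μ s - μ t| ≤ μ.totalVariation.real (s ∆ t) := by
  have hsplit : ∀ {a b : Set S}, MeasurableSet a → MeasurableSet b →
      μ a = μ (a \ b) + μ (a ∩ b) := fun ha hb => by
    rw [← sdiff_self_inter, VectorMeasure.of_sdiff (ha.inter hb) ha inter_subset_left,
      sub_add_cancel]
  have hdiff : μ s - μ t = μ (s \ t) - μ (t \ s) := by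
    rw [hsplit hs ht, hsplit ht hs, inter_comm t]
    ring
  calc |μ s - μ t| ≤ |μ (s \ t)| + |μ (t \ s)| := hdiff ▸ abs_sub _ _
    _ ≤ μ.totalVariation.real (s \ t) + μ.totalVariation.real (t \ s) :=
      add_le_add (μ.norm_le_totalVariation _) (μ.norm_le_totalVariation _)
    _ = μ.totalVariation.real (s ∆ t) := (measureReal_symmDiff_eq hs ht).symm

theorem abs_apply_inter_sub_apply_inter_le (μ : SignedMeasure S) {s t B : Set S}
    (hs : MeasurableSet s) (ht : MeasurableSet t) (hB : MeasurableSet B) :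
    |μ (s ∩ B) - μ (t ∩ B)| ≤ μ.totalVariation.real (s ∆ t) :=
  (μ.abs_apply_sub_apply_le (hs.inter hB) (ht.inter hB)).trans <|
    measureReal_mono (inter_symmDiff_distrib_right s t B ▸ inter_subset_left)

theorem ofReal_apply_le_posPart (μ : SignedMeasure S) {B : Set S} (hB : MeasurableSet B) :
    ENNReal.ofReal (μ B) ≤ μ.toJordanDecomposition.posPart B := by
  rw [μ.apply_eq_posPart_real_sub_negPart_real hB, ← ENNReal.ofReal_toReal (measure_ne_top _ B)]
  exact ENNReal.ofReal_le_ofReal (sub_le_self _ measureReal_nonneg)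

theorem exists_posPart_apply_eq (μ : SignedMeasure S) : ∃ P : Set S, MeasurableSet P ∧
    ∀ B, MeasurableSet B → μ.toJordanDecomposition.posPart B = ENNReal.ofReal (μ (P ∩ B)) := by
  obtain ⟨P, hP, hPpos, -, hpos, -⟩ := μ.toJordanDecomposition_spec
  refine ⟨P, hP, fun B hB => ?_⟩
  rw [hpos, toMeasureOfZeroLE_apply _ hPpos hP hB, ENNReal.ofReal_eq_coe_nnreal]

theorem posPart_apply_eq_iSup {𝒜 : Set (Set S)} (h𝒜 : IsSetAlgebra 𝒜)
    (hgen : ‹MeasurableSpace S› = generateFrom 𝒜) (μ : SignedMeasure S)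
    {B : Set S} (hB : MeasurableSet B) :
    μ.toJordanDecomposition.posPart B = ⨆ A : 𝒜, ENNReal.ofReal (μ (↑A ∩ B)) := by
  have hdense : μ.totalVariation.MeasureDense 𝒜 :=
    .of_generateFrom_isSetAlgebra_finite _ h𝒜 hgen
  refine le_antisymm ?_ <| iSup_le fun A =>
    (μ.ofReal_apply_le_posPart ((hdense.measurable A A.2).inter hB)).trans
      (measure_mono inter_subset_right)
  obtain ⟨P, hP, hPB⟩ := μ.exists_posPart_apply_eq
  rw [hPB B hB]
  refine ENNReal.le_of_forall_pos_le_add fun ε hε _ => ?_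
  obtain ⟨A, hA, hPA⟩ := hdense.approx P hP (measure_ne_top _ _) ε hε
  have hclose : μ (P ∩ B) ≤ μ (A ∩ B) + ε := by
    have := (abs_le.mp (μ.abs_apply_inter_sub_apply_inter_le hP (hdense.measurable A hA) hB)).2
    linarith [ENNReal.toReal_lt_of_lt_ofReal hPA, measureReal_def μ.totalVariation (P ∆ A)]
  calc ENNReal.ofReal (μ (P ∩ B)) ≤ ENNReal.ofReal (μ (A ∩ B)) + ε := by
        simpa using (ENNReal.ofReal_le_ofReal hclose).trans ENNReal.ofReal_add_le
    _ ≤ (⨆ A : 𝒜, ENNReal.ofReal (μ (↑A ∩ B))) + ε := by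
        gcongr
        exact le_iSup_of_le ⟨A, hA⟩ le_rfl

theorem negPart_apply_eq_iSup {𝒜 : Set (Set S)} (h𝒜 : IsSetAlgebra 𝒜)
    (hgen : ‹MeasurableSpace S› = generateFrom 𝒜) (μ : SignedMeasure S)
    {B : Set S} (hB : MeasurableSet B) :
    μ.toJordanDecomposition.negPart B = ⨆ A : 𝒜, ENNReal.ofReal (-μ (↑A ∩ B)) := by
  simpa [toJordanDecomposition_neg] using posPart_apply_eq_iSup h𝒜 hgen (-μ) hB

variable [CountablyGenerated S]

theorem measurable_posPart :
    Measurable fun μ : SignedMeasure S => μ.toJordanDecomposition.posPart := by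
  obtain ⟨𝒜, h𝒜c, h𝒜, hgen⟩ := exists_countable_isSetAlgebra_generateFrom S
  have : Countable 𝒜 := h𝒜c.to_subtype
  refine Measure.measurable_of_measurable_coe _ fun B hB => ?_
  simp_rw [posPart_apply_eq_iSup h𝒜 hgen _ hB]
  exact .iSup fun A => ENNReal.measurable_ofReal.comp <|
    measurable_apply ((hgen ▸ measurableSet_generateFrom A.2).inter hB)

theorem measurable_negPart :
    Measurable fun μ : SignedMeasure S => μ.toJordanDecomposition.negPart := by
  obtain ⟨𝒜, h𝒜c, h𝒜, hgen⟩ := exists_countable_isSetAlgebra_generateFrom S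
  have : Countable 𝒜 := h𝒜c.to_subtype
  refine Measure.measurable_of_measurable_coe _ fun B hB => ?_
  simp_rw [negPart_apply_eq_iSup h𝒜 hgen _ hB]
  exact .iSup fun A => ENNReal.measurable_ofReal.comp <|
    (measurable_apply ((hgen ▸ measurableSet_generateFrom A.2).inter hB)).neg

end MeasureTheory.SignedMeasure

/-- for a standard Borel space `S`, the Jordan decomposition maps
`μ ↦ μ⁺` and `μ ↦ μ⁻` from `M±(S)` to `M(S)` are measurable, where `M(S)`
(the finite nonnegative measures) carries the σ-algebra induced by the
evaluation maps. -/
theorem jordanDecomposition_measurable (S : Type*) [MeasurableSpace S] [StandardBorelSpace S] :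
    Measurable (fun μ : SignedMeasure S =>
      (⟨μ.toJordanDecomposition.posPart, inferInstance⟩ :
        {ν : Measure S // IsFiniteMeasure ν})) ∧
    Measurable (fun μ : SignedMeasure S =>
      (⟨μ.toJordanDecomposition.negPart, inferInstance⟩ :
        {ν : Measure S // IsFiniteMeasure ν})) :=
  ⟨SignedMeasure.measurable_posPart.subtype_mk, SignedMeasure.measurable_negPart.subtype_mk⟩
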